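/- arXiv:1707.09906 — 5 statements merged into one kernel-verified Lean document; each statement's English description precedes it below -/
import Mathlib

section
/- Let (X, 𝔸, d) be a C*-algebra-valued b-metric space with coefficient A, endowed with a directed graph G with V(G) = X whose edge set contains all loops, and let f, g : X → X be mappings satisfying d(fx, fy) ⪯ B* d(gx, gy) B for all x, y ∈ X with (gx, gy) ∈ E(G̃), where B ∈ 𝔸 and ‖A‖·‖B‖² < 1. Suppose f(X) ⊆ g(X), g(X) is a complete subspace of X, and property (P1) holds. Then: (i) if C_{gf} ≠ ∅, then the set PC(f, g) of points of coincidence of f and g is nonempty; (ii) if moreover the graph G has property (P2), then PC(f, g) is a singleton; (iii) if in addition f and g are weakly compatible, then f and g have a unique common fixed point in X. -/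
/-- **Theorem 3.1.** Let `(X, 𝔸, d)` be a `C*`-algebra-valued `b`-metric space with
coefficient `A`, endowed with a directed graph `G` (encoded by its edge relation `E`,
containing all loops) with vertex set `X`.  Let `f, g : X → X` satisfy
`d (f x) (f y) ⪯ B* ⬝ d (g x) (g y) ⬝ B` whenever `(g x, g y)` is an edge of the
symmetrized graph `G̃`, where `‖A‖ ⬝ ‖B‖² < 1`.  Suppose `f(X) ⊆ g(X)`, `g(X)` is a
complete subspace of `X`, and property (P1) holds.  Then:
(i) if `C_{gf} ≠ ∅` then the set `PC(f, g)` of points of coincidence is nonempty;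
(ii) if moreover property (P2) holds then `PC(f, g)` is a singleton;
(iii) if in addition `f` and `g` are weakly compatible then `f` and `g` have a unique
common fixed point. -/
theorem common_fixed_point_of_cstar_bmetric_graph_contraction
    {X : Type*} {𝔸 : Type*} [CStarAlgebra 𝔸] [PartialOrder 𝔸] [StarOrderedRing 𝔸]
    (d : X → X → 𝔸) (A : 𝔸)
    (hA_pos : 0 ≤ A) (hA_one : (1 : 𝔸) ≤ A)
    (hd_nonneg : ∀ x y, 0 ≤ d x y)
    (hd_eq_zero : ∀ x y, d x y = 0 ↔ x = y)
    (hd_symm : ∀ x y, d x y = d y x)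
    (hd_triangle : ∀ x y z, d x y ≤ A * (d x z + d z y))
    (E : X → X → Prop) (hE_refl : ∀ x, E x x)
    (f g : X → X) (B : 𝔸)
    (hcontr : ∀ x y, (E (g x) (g y) ∨ E (g y) (g x)) →
      d (f x) (f y) ≤ star B * d (g x) (g y) * B)
    (hnorm : ‖A‖ * ‖B‖ ^ 2 < 1)
    (hrange : Set.range f ⊆ Set.range g)
    -- `g(X)` is a complete subspace of `X`
    (hg_complete : ∀ s : ℕ → X, (∀ n, s n ∈ Set.range g) →
      (∀ ε : ℝ, 0 < ε → ∃ N, ∀ m ≥ N, ∀ n ≥ N, ‖d (s m) (s n)‖ < ε) →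
      ∃ p ∈ Set.range g, Filter.Tendsto (fun n => ‖d (s n) p‖) Filter.atTop (nhds 0))
    -- property (P1)
    (hP1 : ∀ (u : ℕ → X) (p : X),
      Filter.Tendsto (fun n => ‖d (g (u n)) p‖) Filter.atTop (nhds 0) →
      (∀ n, E (g (u n)) (g (u (n + 1))) ∨ E (g (u (n + 1))) (g (u n))) →
      ∃ φ : ℕ → ℕ, StrictMono φ ∧ ∀ i, E (g (u (φ i))) p ∨ E p (g (u (φ i))))
    -- `C_{gf} ≠ ∅`
    (hC : ∃ u : ℕ → X, (∀ n, g (u (n + 1)) = f (u n)) ∧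
      ∀ m n, E (g (u m)) (g (u n)) ∨ E (g (u n)) (g (u m))) :
    (∃ y x, f x = y ∧ g x = y) ∧
    -- property (P2) gives uniqueness of the point of coincidence
    ((∀ y₁ y₂, (∃ x, f x = y₁ ∧ g x = y₁) → (∃ x, f x = y₂ ∧ g x = y₂) →
        (E y₁ y₂ ∨ E y₂ y₁)) →
      (∃! y, ∃ x, f x = y ∧ g x = y) ∧
      -- weak compatibility gives a unique common fixed point
      ((∀ x, f x = g x → f (g x) = g (f x)) → ∃! z, f z = z ∧ g z = z)) := by
  classical
  obtain ⟨u, hu, hedge⟩ := hC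
  rcases subsingleton_or_nontrivial 𝔸 with hsub | hnt
  · -- degenerate case: `𝔸` trivial forces `X` to be a subsingleton
    have hX : ∀ x y : X, x = y := fun x y => (hd_eq_zero x y).mp (Subsingleton.elim _ _)
    exact ⟨⟨f (u 0), u 0, rfl, hX _ _⟩, fun _ =>
      ⟨⟨f (u 0), ⟨u 0, rfl, hX _ _⟩, fun y _ => hX y _⟩, fun _ =>
        ⟨f (u 0), ⟨hX _ _, hX _ _⟩, fun z _ => hX z _⟩⟩⟩
  -- main case
  have hA0 : (0:ℝ) ≤ ‖A‖ := norm_nonneg A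
  have hr0 : (0:ℝ) ≤ ‖B‖ ^ 2 := by positivity
  have hA1 : (1:ℝ) ≤ ‖A‖ := by
    have h := CStarAlgebra.norm_le_norm_of_nonneg_of_le (a := (1:𝔸)) zero_le_one hA_one
    simpa using h
  have hr1 : ‖B‖ ^ 2 < 1 := by nlinarith
  -- norm form of the contraction
  have hcn : ∀ x y, (E (g x) (g y) ∨ E (g y) (g x)) →
      ‖d (f x) (f y)‖ ≤ ‖B‖ ^ 2 * ‖d (g x) (g y)‖ := by
    intro x y h
    calc ‖d (f x) (f y)‖ ≤ ‖star B * d (g x) (g y) * B‖ :=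
          CStarAlgebra.norm_le_norm_of_nonneg_of_le (hd_nonneg _ _) (hcontr x y h)
      _ ≤ ‖star B * d (g x) (g y)‖ * ‖B‖ := norm_mul_le _ _
      _ ≤ (‖star B‖ * ‖d (g x) (g y)‖) * ‖B‖ := by
          gcongr
          exact norm_mul_le _ _
      _ = ‖B‖ ^ 2 * ‖d (g x) (g y)‖ := by rw [norm_star]; ring
  -- norm form of the b-triangle inequality
  have htn : ∀ x y z : X, ‖d x y‖ ≤ ‖A‖ * (‖d x z‖ + ‖d z y‖) := by
    intro x y z
    calc ‖d x y‖ ≤ ‖A * (d x z + d z y)‖ :=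
          CStarAlgebra.norm_le_norm_of_nonneg_of_le (hd_nonneg _ _) (hd_triangle x y z)
      _ ≤ ‖A‖ * ‖d x z + d z y‖ := norm_mul_le _ _
      _ ≤ ‖A‖ * (‖d x z‖ + ‖d z y‖) := by gcongr; exact norm_add_le _ _
  set D0 : ℝ := ‖d (g (u 0)) (g (u 1))‖ with hD0
  have hD00 : 0 ≤ D0 := norm_nonneg _
  -- geometric decay of consecutive distances
  have hDgeom : ∀ n, ‖d (g (u n)) (g (u (n+1)))‖ ≤ (‖B‖ ^ 2) ^ n * D0 := by
    intro n
    induction n with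
    | zero => simp [hD0]
    | succ n ih =>
      have h1 := hcn (u n) (u (n+1)) (hedge n (n+1))
      rw [← hu n, ← hu (n+1)] at h1
      calc ‖d (g (u (n+1))) (g (u (n+2)))‖ ≤ ‖B‖ ^ 2 * ‖d (g (u n)) (g (u (n+1)))‖ := h1
        _ ≤ ‖B‖ ^ 2 * ((‖B‖ ^ 2) ^ n * D0) := by gcongr
        _ = (‖B‖ ^ 2) ^ (n+1) * D0 := by ring
  set K : ℝ := max D0 (‖A‖ * D0 / (1 - ‖A‖ * ‖B‖ ^ 2)) with hK
  have hK0 : 0 ≤ K := le_trans hD00 (le_max_left _ _)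
  have hKD : D0 ≤ K := le_max_left _ _
  have hc1 : (0:ℝ) < 1 - ‖A‖ * ‖B‖ ^ 2 := by linarith
  have hKA : ‖A‖ * D0 ≤ (1 - ‖A‖ * ‖B‖ ^ 2) * K := by
    have h2 : ‖A‖ * D0 / (1 - ‖A‖ * ‖B‖ ^ 2) ≤ K := le_max_right _ _
    calc ‖A‖ * D0 = (1 - ‖A‖ * ‖B‖ ^ 2) * (‖A‖ * D0 / (1 - ‖A‖ * ‖B‖ ^ 2)) := by
          field_simp
      _ ≤ (1 - ‖A‖ * ‖B‖ ^ 2) * K := by gcongr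
  -- uniform bound on distances along the chain
  have bound : ∀ k m, ‖d (g (u m)) (g (u (m + k + 1)))‖ ≤ K * (‖B‖ ^ 2) ^ m := by
    intro k
    induction k with
    | zero =>
      intro m
      have h := hDgeom m
      have hpm : (0:ℝ) ≤ (‖B‖ ^ 2) ^ m := by positivity
      calc ‖d (g (u m)) (g (u (m + 0 + 1)))‖ = ‖d (g (u m)) (g (u (m + 1)))‖ := by norm_num
        _ ≤ (‖B‖ ^ 2) ^ m * D0 := h
        _ ≤ (‖B‖ ^ 2) ^ m * K := by gcongr
        _ = K * (‖B‖ ^ 2) ^ m := by ring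
    | succ k ih =>
      intro m
      have hmid := ih (m + 1)
      have hidx : m + 1 + k + 1 = m + (k + 1) + 1 := by omega
      rw [hidx] at hmid
      have hDm := hDgeom m
      have hpm : (0:ℝ) ≤ (‖B‖ ^ 2) ^ m := by positivity
      calc ‖d (g (u m)) (g (u (m + (k + 1) + 1)))‖
          ≤ ‖A‖ * (‖d (g (u m)) (g (u (m + 1)))‖ +
              ‖d (g (u (m + 1))) (g (u (m + (k + 1) + 1)))‖) := htn _ _ _
        _ ≤ ‖A‖ * ((‖B‖ ^ 2) ^ m * D0 + K * (‖B‖ ^ 2) ^ (m + 1)) := by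
            gcongr
        _ = (‖A‖ * D0) * (‖B‖ ^ 2) ^ m + (‖A‖ * ‖B‖ ^ 2) * K * (‖B‖ ^ 2) ^ m := by ring
        _ ≤ ((1 - ‖A‖ * ‖B‖ ^ 2) * K) * (‖B‖ ^ 2) ^ m
              + (‖A‖ * ‖B‖ ^ 2) * K * (‖B‖ ^ 2) ^ m := by gcongr
        _ = K * (‖B‖ ^ 2) ^ m := by ring
  -- the chain is Cauchy
  have hcauchy : ∀ ε : ℝ, 0 < ε → ∃ N, ∀ m ≥ N, ∀ n ≥ N,
      ‖d (g (u m)) (g (u n))‖ < ε := by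
    intro ε hε
    have htend : Filter.Tendsto (fun n : ℕ => K * (‖B‖ ^ 2) ^ n) Filter.atTop (nhds 0) := by
      have := (tendsto_pow_atTop_nhds_zero_of_lt_one hr0 hr1).const_mul K
      simpa using this
    obtain ⟨N, hN⟩ := Filter.eventually_atTop.mp (htend.eventually_lt_const hε)
    refine ⟨N, fun m hm n hn => ?_⟩
    have key : ∀ a b : ℕ, N ≤ a → a < b → ‖d (g (u a)) (g (u b))‖ < ε := by
      intro a b ha hab
      have hidx : a + (b - a - 1) + 1 = b := by omega
      have hb := bound (b - a - 1) a
      rw [hidx] at hb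
      calc ‖d (g (u a)) (g (u b))‖ ≤ K * (‖B‖ ^ 2) ^ a := hb
        _ ≤ K * (‖B‖ ^ 2) ^ N :=
            mul_le_mul_of_nonneg_left (pow_le_pow_of_le_one hr0 hr1.le ha) hK0
        _ < ε := hN N le_rfl
    rcases lt_trichotomy m n with h | h | h
    · exact key m n hm h
    · have : d (g (u m)) (g (u n)) = 0 := (hd_eq_zero _ _).mpr (by rw [h])
      simpa [this] using hε
    · rw [hd_symm]
      exact key n m hn h
  -- completeness of g(X)
  obtain ⟨p, hp_mem, hp_lim⟩ :=
    hg_complete (fun n => g (u n)) (fun n => ⟨u n, rfl⟩) hcauchy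
  obtain ⟨z, hz⟩ := hp_mem
  -- property (P1)
  obtain ⟨φ, hφmono, hφedge⟩ := hP1 u p hp_lim (fun n => hedge n (n+1))
  -- f z = p
  have hfz : ∀ i, ‖d (f z) p‖ ≤
      ‖A‖ * (‖B‖ ^ 2 * ‖d (g (u (φ i))) p‖ + ‖d (g (u (φ i + 1))) p‖) := by
    intro i
    have hcz : ‖d (f z) (f (u (φ i)))‖ ≤ ‖B‖ ^ 2 * ‖d (g z) (g (u (φ i)))‖ := by
      refine hcn z (u (φ i)) ?_
      rcases hφedge i with h | h
      · right; rwa [hz]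
      · left; rwa [hz]
    have h1 : ‖d (f z) (g (u (φ i + 1)))‖ ≤ ‖B‖ ^ 2 * ‖d (g (u (φ i))) p‖ := by
      rw [hu (φ i)]
      calc ‖d (f z) (f (u (φ i)))‖ ≤ ‖B‖ ^ 2 * ‖d (g z) (g (u (φ i)))‖ := hcz
        _ = ‖B‖ ^ 2 * ‖d (g (u (φ i))) p‖ := by rw [hz, hd_symm]
    calc ‖d (f z) p‖
        ≤ ‖A‖ * (‖d (f z) (g (u (φ i + 1)))‖ + ‖d (g (u (φ i + 1))) p‖) := htn _ _ _
      _ ≤ ‖A‖ * (‖B‖ ^ 2 * ‖d (g (u (φ i))) p‖ + ‖d (g (u (φ i + 1))) p‖) := by gcongr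
  have hsub1 : Filter.Tendsto (fun i => ‖d (g (u (φ i))) p‖) Filter.atTop (nhds 0) :=
    hp_lim.comp hφmono.tendsto_atTop
  have hsub2 : Filter.Tendsto (fun i => ‖d (g (u (φ i + 1))) p‖) Filter.atTop (nhds 0) :=
    hp_lim.comp (Filter.tendsto_atTop_mono (fun i => Nat.le_succ (φ i)) hφmono.tendsto_atTop)
  have hlim : Filter.Tendsto
      (fun i => ‖A‖ * (‖B‖ ^ 2 * ‖d (g (u (φ i))) p‖ + ‖d (g (u (φ i + 1))) p‖))
      Filter.atTop (nhds 0) := by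
    have := ((hsub1.const_mul (‖B‖ ^ 2)).add hsub2).const_mul ‖A‖
    simpa using this
  have hle0 : ‖d (f z) p‖ ≤ 0 := ge_of_tendsto hlim (Filter.Eventually.of_forall hfz)
  have hfzp : f z = p := (hd_eq_zero _ _).mp (norm_le_zero_iff.mp hle0)
  refine ⟨⟨p, z, hfzp, hz⟩, fun hP2 => ?_⟩
  -- uniqueness of points of coincidence
  have uniq : ∀ y₁ y₂, (∃ x, f x = y₁ ∧ g x = y₁) → (∃ x, f x = y₂ ∧ g x = y₂) →
      y₁ = y₂ := by
    intro y₁ y₂ h₁ h₂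
    obtain ⟨x₁, hf₁, hg₁⟩ := h₁
    obtain ⟨x₂, hf₂, hg₂⟩ := h₂
    have he : E (g x₁) (g x₂) ∨ E (g x₂) (g x₁) := by
      rw [hg₁, hg₂]; exact hP2 y₁ y₂ ⟨x₁, hf₁, hg₁⟩ ⟨x₂, hf₂, hg₂⟩
    have hc := hcn x₁ x₂ he
    rw [hf₁, hf₂, hg₁, hg₂] at hc
    have h0 : ‖d y₁ y₂‖ = 0 := by nlinarith [norm_nonneg (d y₁ y₂)]
    exact (hd_eq_zero _ _).mp (norm_eq_zero.mp h0)
  refine ⟨⟨p, ⟨z, hfzp, hz⟩, fun y hy => uniq y p hy ⟨z, hfzp, hz⟩⟩, fun hwc => ?_⟩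
  -- weak compatibility gives a unique common fixed point
  have hfg : f z = g z := by rw [hfzp, hz]
  have hcomm := hwc z hfg
  have hgp : g p = f p := by rw [← hfzp, ← hcomm, hz, ← hfzp]
  have hpp : f p = p := uniq (f p) p ⟨p, rfl, hgp⟩ ⟨z, hfzp, hz⟩
  have hgpp : g p = p := by rw [hgp, hpp]
  exact ⟨p, ⟨hpp, hgpp⟩, fun z' hz' => uniq z' p ⟨z', hz'.1, hz'.2⟩ ⟨z, hfzp, hz⟩⟩
end

section
/- Let (X, 𝔸, d) be a complete C*-algebra-valued b-metric space with coefficient A, endowed with a directed graph G with V(G) = X whose edge set contains all loops, and let f : X → X satisfy d(fx, fy) ⪯ B* d(x, y) B for all x, y ∈ X with (x, y) ∈ E(G̃), where B ∈ 𝔸 and ‖A‖·‖B‖² < 1. Suppose (X, 𝔸, d, G) has property (P3). Then: (i) if C_f ≠ ∅, then f has a fixed point in X; (ii) if moreover the graph G has property (P4), then f has a unique fixed point in X. -/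
/-!
Taking norms turns the `𝔸`-valued `b`-metric `d` into a real `b`-metric `‖d‖` with constant
`s = ‖A‖`, and the contraction condition into `‖d (f x) (f y)‖ ≤ k ‖d x y‖` along edges, with
`k = ‖B‖²` and `s k < 1`. From a point of `C_f` the orbit has geometrically decaying steps, and
because `s k < 1` the `b`-triangle inequality can be iterated without the constants blowing up,
so the orbit is Cauchy. Its limit is fixed by `f` since (P3) supplies infinitely many edges
from the orbit to the limit, along which the contraction applies.
-/

open Filter Topology Function Relation

section CStarAlgebra

variable {𝔸 : Type*} [CStarAlgebra 𝔸] [PartialOrder 𝔸] [StarOrderedRing 𝔸]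

theorem CStarAlgebra.norm_le_sq_norm_mul_of_le_star_mul_mul {a b B : 𝔸} (ha : 0 ≤ a)
    (h : a ≤ star B * b * B) : ‖a‖ ≤ ‖B‖ ^ 2 * ‖b‖ :=
  calc ‖a‖ ≤ ‖star B * b * B‖ := CStarAlgebra.norm_le_norm_of_nonneg_of_le ha h
    _ ≤ ‖star B‖ * ‖b‖ * ‖B‖ := norm_mul₃_le
    _ = ‖B‖ ^ 2 * ‖b‖ := by rw [norm_star]; ring

theorem CStarAlgebra.sq_norm_lt_one_of_one_le {A B : 𝔸} (hA : 1 ≤ A)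
    (h : ‖A‖ * ‖B‖ ^ 2 < 1) : ‖B‖ ^ 2 < 1 := by
  nontriviality 𝔸
  have : 1 ≤ ‖A‖ := by
    simpa using CStarAlgebra.norm_le_norm_of_nonneg_of_le zero_le_one hA
  nlinarith [sq_nonneg ‖B‖]

end CStarAlgebra

structure IsBMetric {X : Type*} (ρ : X → X → ℝ) (s : ℝ) : Prop where
  nonneg : ∀ x y, 0 ≤ ρ x y
  eq_zero_iff : ∀ x y, ρ x y = 0 ↔ x = y
  symm : ∀ x y, ρ x y = ρ y x
  triangle : ∀ x y z, ρ x y ≤ s * (ρ x z + ρ z y)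

def IsBCauchySeq {X : Type*} (ρ : X → X → ℝ) (u : ℕ → X) : Prop :=
  ∀ ε : ℝ, 0 < ε → ∃ N, ∀ m ≥ N, ∀ n ≥ N, ρ (u m) (u n) < ε

theorem isBMetric_norm {X 𝔸 : Type*} [CStarAlgebra 𝔸] [PartialOrder 𝔸] [StarOrderedRing 𝔸]
    {d : X → X → 𝔸} {A : 𝔸} (hd_nonneg : ∀ x y, 0 ≤ d x y)
    (hd_eq_zero : ∀ x y, d x y = 0 ↔ x = y) (hd_symm : ∀ x y, d x y = d y x)
    (hd_triangle : ∀ x y z, d x y ≤ A * (d x z + d z y)) :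
    IsBMetric (fun x y => ‖d x y‖) ‖A‖ where
  nonneg _ _ := norm_nonneg _
  eq_zero_iff x y := norm_eq_zero.trans (hd_eq_zero x y)
  symm x y := by rw [hd_symm]
  triangle x y z :=
    calc ‖d x y‖ ≤ ‖A * (d x z + d z y)‖ :=
          CStarAlgebra.norm_le_norm_of_nonneg_of_le (hd_nonneg x y) (hd_triangle x y z)
      _ ≤ ‖A‖ * (‖d x z‖ + ‖d z y‖) := norm_mul_le_of_le le_rfl (norm_add_le _ _)

namespace IsBMetric

variable {X : Type*} {ρ : X → X → ℝ} {s k : ℝ}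

theorem eq_of_le_zero (hρ : IsBMetric ρ s) {x y : X} (h : ρ x y ≤ 0) : x = y :=
  (hρ.eq_zero_iff x y).1 (h.antisymm (hρ.nonneg x y))

theorem exists_le_mul_pow_of_le_mul_pow (hρ : IsBMetric ρ s) (hs : 0 ≤ s) (hk : 0 ≤ k)
    (hsk : s * k < 1) {u : ℕ → X} {D : ℝ} (hu : ∀ n, ρ (u n) (u (n + 1)) ≤ D * k ^ n) :
    ∃ C, ∀ n p, ρ (u n) (u (n + p + 1)) ≤ C * k ^ n := by
  -- the induction step needs `s D + s k C ≤ C`, i.e. `C ≥ s D / (1 - s k)`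
  set C := max D (s * D / (1 - s * k))
  have hC : s * D + s * k * C ≤ C := by
    have := (div_le_iff₀ (sub_pos.2 hsk)).1 (le_max_right D (s * D / (1 - s * k)))
    linarith
  refine ⟨C, fun n p => ?_⟩
  induction p generalizing n with
  | zero => exact (hu n).trans (mul_le_mul_of_nonneg_right (le_max_left _ _) (pow_nonneg hk n))
  | succ p ih =>
    calc ρ (u n) (u (n + (p + 1) + 1))
        ≤ s * (ρ (u n) (u (n + 1)) + ρ (u (n + 1)) (u (n + 1 + p + 1))) := by
          rw [show n + 1 + p + 1 = n + (p + 1) + 1 by omega]; exact hρ.triangle _ _ _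
      _ ≤ s * (D * k ^ n + C * k ^ (n + 1)) := by gcongr; exacts [hu n, ih (n + 1)]
      _ = (s * D + s * k * C) * k ^ n := by ring
      _ ≤ C * k ^ n := by gcongr

theorem isBCauchySeq_of_le_mul_pow (hρ : IsBMetric ρ s) (hs : 0 ≤ s) (hk : 0 ≤ k) (hk1 : k < 1)
    (hsk : s * k < 1) {u : ℕ → X} {D : ℝ} (hu : ∀ n, ρ (u n) (u (n + 1)) ≤ D * k ^ n) :
    IsBCauchySeq ρ u := by
  obtain ⟨C, hC⟩ := hρ.exists_le_mul_pow_of_le_mul_pow hs hk hsk hu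
  intro ε hε
  have hlim : Tendsto (fun n => C * k ^ n) atTop (𝓝 0) := by
    simpa using (tendsto_pow_atTop_nhds_zero_of_lt_one hk hk1).const_mul C
  obtain ⟨N, hN⟩ := eventually_atTop.1 (hlim.eventually (gt_mem_nhds hε))
  have hle : ∀ m n, N ≤ m → m ≤ n → ρ (u m) (u n) < ε := by
    intro m n hm hmn
    rcases hmn.eq_or_lt with rfl | hlt
    · simpa [(hρ.eq_zero_iff _ _).2 rfl] using hε
    · obtain ⟨p, rfl⟩ := Nat.exists_eq_add_of_lt hlt
      exact (hC m p).trans_lt (hN m hm)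
  refine ⟨N, fun m hm n hn => ?_⟩
  rcases le_total m n with hmn | hnm
  · exact hle m n hm hmn
  · rw [hρ.symm]; exact hle n m hn hnm

variable {E : X → X → Prop} {f : X → X}

theorem orbit_le_mul_pow (hk : 0 ≤ k)
    (hcontr : ∀ x y, SymmGen E x y → ρ (f x) (f y) ≤ k * ρ x y)
    {x₀ : X} (hx₀ : ∀ m n : ℕ, SymmGen E (f^[n] x₀) (f^[m] x₀)) (n : ℕ) :
    ρ (f^[n] x₀) (f^[n + 1] x₀) ≤ ρ x₀ (f x₀) * k ^ n := by
  induction n with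
  | zero => simp
  | succ n ih =>
    calc ρ (f^[n + 1] x₀) (f^[n + 1 + 1] x₀)
        ≤ k * ρ (f^[n] x₀) (f^[n + 1] x₀) := by
          simpa only [iterate_succ_apply'] using hcontr _ _ (hx₀ (n + 1) n)
      _ ≤ k * (ρ x₀ (f x₀) * k ^ n) := by gcongr
      _ = ρ x₀ (f x₀) * k ^ (n + 1) := by ring

theorem isFixedPt_of_tendsto (hρ : IsBMetric ρ s) (hs : 0 ≤ s)
    (hcontr : ∀ x y, SymmGen E x y → ρ (f x) (f y) ≤ k * ρ x y) {u : ℕ → X}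
    (hu : ∀ n, u (n + 1) = f (u n)) {p : X} (hup : Tendsto (fun n => ρ (u n) p) atTop (𝓝 0))
    {φ : ℕ → ℕ} (hφ : StrictMono φ) (hedge : ∀ i, SymmGen E (u (φ i)) p) : IsFixedPt f p := by
  have hbound : ∀ i, ρ p (f p) ≤ s * (ρ (u (φ i + 1)) p + k * ρ (u (φ i)) p) := fun i =>
    calc ρ p (f p) ≤ s * (ρ p (u (φ i + 1)) + ρ (u (φ i + 1)) (f p)) := hρ.triangle _ _ _
      _ ≤ s * (ρ (u (φ i + 1)) p + k * ρ (u (φ i)) p) := by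
        rw [hρ.symm p, hu]; gcongr; exact hcontr _ _ (hedge i)
  have hφ_top := hφ.tendsto_atTop
  have hlim : Tendsto (fun i => s * (ρ (u (φ i + 1)) p + k * ρ (u (φ i)) p)) atTop (𝓝 0) := by
    simpa using ((hup.comp ((tendsto_add_atTop_nat 1).comp hφ_top)).add
      ((hup.comp hφ_top).const_mul k)).const_mul s
  exact (hρ.eq_of_le_zero (ge_of_tendsto' hlim hbound)).symm

theorem eq_of_isFixedPt (hρ : IsBMetric ρ s) (hk1 : k < 1)
    (hcontr : ∀ x y, SymmGen E x y → ρ (f x) (f y) ≤ k * ρ x y) {x y : X} (hx : IsFixedPt f x)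
    (hy : IsFixedPt f y) (hxy : SymmGen E x y) : x = y := by
  have h := hcontr x y hxy
  rw [hx, hy] at h
  exact hρ.eq_of_le_zero (by nlinarith [hρ.nonneg x y])

theorem exists_isFixedPt (hρ : IsBMetric ρ s) (hs : 0 ≤ s) (hk : 0 ≤ k) (hk1 : k < 1)
    (hsk : s * k < 1)
    (hcomplete : ∀ u : ℕ → X, IsBCauchySeq ρ u → ∃ p, Tendsto (fun n => ρ (u n) p) atTop (𝓝 0))
    (hcontr : ∀ x y, SymmGen E x y → ρ (f x) (f y) ≤ k * ρ x y)
    (hP3 : ∀ (u : ℕ → X) (p : X), Tendsto (fun n => ρ (u n) p) atTop (𝓝 0) →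
      (∀ n, SymmGen E (u (n + 1)) (u n)) →
      ∃ φ : ℕ → ℕ, StrictMono φ ∧ ∀ i, SymmGen E (u (φ i)) p)
    {x₀ : X} (hx₀ : ∀ m n : ℕ, SymmGen E (f^[n] x₀) (f^[m] x₀)) : ∃ p, IsFixedPt f p := by
  set u : ℕ → X := fun n => f^[n] x₀
  have hu : ∀ n, u (n + 1) = f (u n) := fun n => iterate_succ_apply' f n x₀
  obtain ⟨p, hup⟩ := hcomplete u <|
    hρ.isBCauchySeq_of_le_mul_pow hs hk hk1 hsk (orbit_le_mul_pow hk hcontr hx₀)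
  obtain ⟨φ, hφ, hedge⟩ := hP3 u p hup fun n => hx₀ n (n + 1)
  exact ⟨p, hρ.isFixedPt_of_tendsto hs hcontr hu hup hφ hedge⟩

end IsBMetric

theorem fixed_point_of_cstar_bmetric_graph_contraction_general
    {X : Type*} {𝔸 : Type*} [CStarAlgebra 𝔸] [PartialOrder 𝔸] [StarOrderedRing 𝔸]
    (d : X → X → 𝔸) (A : 𝔸)
    (hA_one : (1 : 𝔸) ≤ A)
    (hd_nonneg : ∀ x y, 0 ≤ d x y)
    (hd_eq_zero : ∀ x y, d x y = 0 ↔ x = y)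
    (hd_symm : ∀ x y, d x y = d y x)
    (hd_triangle : ∀ x y z, d x y ≤ A * (d x z + d z y))
    -- `X` is complete
    (hcomplete : ∀ s : ℕ → X,
      (∀ ε : ℝ, 0 < ε → ∃ N, ∀ m ≥ N, ∀ n ≥ N, ‖d (s m) (s n)‖ < ε) →
      ∃ p, Filter.Tendsto (fun n => ‖d (s n) p‖) Filter.atTop (nhds 0))
    (E : X → X → Prop)
    (f : X → X) (B : 𝔸)
    (hcontr : ∀ x y, (E x y ∨ E y x) → d (f x) (f y) ≤ star B * d x y * B)
    (hnorm : ‖A‖ * ‖B‖ ^ 2 < 1)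
    -- property (P3)
    (hP3 : ∀ (s : ℕ → X) (p : X),
      Filter.Tendsto (fun n => ‖d (s n) p‖) Filter.atTop (nhds 0) →
      (∀ n, E (s (n + 1)) (s n) ∨ E (s n) (s (n + 1))) →
      ∃ φ : ℕ → ℕ, StrictMono φ ∧ ∀ i, E (s (φ i)) p ∨ E p (s (φ i)))
    -- `C_f ≠ ∅`
    (hC : ∃ x : X, ∀ m n : ℕ, E (f^[n] x) (f^[m] x) ∨ E (f^[m] x) (f^[n] x)) :
    (∃ x, f x = x) ∧
    -- property (P4) gives uniqueness of the fixed point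
    ((∀ x y, f x = x → f y = y → (E x y ∨ E y x)) → ∃! x, f x = x) := by
  have hρ := isBMetric_norm hd_nonneg hd_eq_zero hd_symm hd_triangle
  have hk1 := CStarAlgebra.sq_norm_lt_one_of_one_le hA_one hnorm
  have hcontr' : ∀ x y, SymmGen E x y → ‖d (f x) (f y)‖ ≤ ‖B‖ ^ 2 * ‖d x y‖ := fun x y hxy =>
    CStarAlgebra.norm_le_sq_norm_mul_of_le_star_mul_mul (hd_nonneg _ _) (hcontr x y hxy)
  obtain ⟨x₀, hx₀⟩ := hC
  obtain ⟨p, hp⟩ := hρ.exists_isFixedPt (norm_nonneg A) (sq_nonneg _) hk1 hnorm hcomplete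
    hcontr' hP3 hx₀
  exact ⟨⟨p, hp⟩, fun hP4 =>
    ⟨p, hp, fun y hy => hρ.eq_of_isFixedPt hk1 hcontr' hy hp (hP4 y p hy hp)⟩⟩

/-- **Corollary 3.4.** Let `(X, 𝔸, d)` be a complete `C*`-algebra-valued `b`-metric space
with coefficient `A`, endowed with a graph `G` (edge relation `E` containing all loops),
and let `f : X → X` satisfy `d (f x) (f y) ⪯ B* ⬝ d x y ⬝ B` whenever `(x, y)` is an edge
of the symmetrized graph `G̃`, with `‖A‖ ⬝ ‖B‖² < 1`.  Suppose property (P3) holds.  Then: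
(i) if `C_f ≠ ∅` then `f` has a fixed point;
(ii) if moreover property (P4) holds then `f` has a unique fixed point. -/
theorem fixed_point_of_cstar_bmetric_graph_contraction
    {X : Type*} {𝔸 : Type*} [CStarAlgebra 𝔸] [PartialOrder 𝔸] [StarOrderedRing 𝔸]
    (d : X → X → 𝔸) (A : 𝔸)
    (hA_pos : 0 ≤ A) (hA_one : (1 : 𝔸) ≤ A)
    (hd_nonneg : ∀ x y, 0 ≤ d x y)
    (hd_eq_zero : ∀ x y, d x y = 0 ↔ x = y)
    (hd_symm : ∀ x y, d x y = d y x)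
    (hd_triangle : ∀ x y z, d x y ≤ A * (d x z + d z y))
    -- `X` is complete
    (hcomplete : ∀ s : ℕ → X,
      (∀ ε : ℝ, 0 < ε → ∃ N, ∀ m ≥ N, ∀ n ≥ N, ‖d (s m) (s n)‖ < ε) →
      ∃ p, Filter.Tendsto (fun n => ‖d (s n) p‖) Filter.atTop (nhds 0))
    (E : X → X → Prop) (hE_refl : ∀ x, E x x)
    (f : X → X) (B : 𝔸)
    (hcontr : ∀ x y, (E x y ∨ E y x) → d (f x) (f y) ≤ star B * d x y * B)
    (hnorm : ‖A‖ * ‖B‖ ^ 2 < 1)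
    -- property (P3)
    (hP3 : ∀ (s : ℕ → X) (p : X),
      Filter.Tendsto (fun n => ‖d (s n) p‖) Filter.atTop (nhds 0) →
      (∀ n, E (s (n + 1)) (s n) ∨ E (s n) (s (n + 1))) →
      ∃ φ : ℕ → ℕ, StrictMono φ ∧ ∀ i, E (s (φ i)) p ∨ E p (s (φ i)))
    -- `C_f ≠ ∅`
    (hC : ∃ x : X, ∀ m n : ℕ, E (f^[n] x) (f^[m] x) ∨ E (f^[m] x) (f^[n] x)) :
    (∃ x, f x = x) ∧
    -- property (P4) gives uniqueness of the fixed point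
    ((∀ x y, f x = x → f y = y → (E x y ∨ E y x)) → ∃! x, f x = x) :=
  fixed_point_of_cstar_bmetric_graph_contraction_general d A hA_one hd_nonneg hd_eq_zero hd_symm
    hd_triangle hcomplete E f B hcontr hnorm hP3 hC
end

section
/- Let (X, 𝔸, d) be a C*-algebra-valued b-metric space with coefficient A, endowed with a directed graph G with V(G) = X whose edge set contains all loops, and let f, g : X → X be mappings satisfying d(fx, fy) ⪯ B(d(fx, gx) + d(fy, gy)) for all x, y ∈ X with (gx, gy) ∈ E(G̃), where B is a positive element of 𝔸 commuting with every element of 𝔸 and ‖BA‖ < 1/2. Suppose f(X) ⊆ g(X), g(X) is a complete subspace of X, and property (P1) holds. Then: (i) if C_{gf} ≠ ∅, then the set PC(f, g) of points of coincidence of f and g is nonempty; (ii) if moreover the graph G has property (P2), then PC(f, g) is a singleton; (iii) if in addition f and g are weakly compatible, then f and g have a unique common fixed point in X. -/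
/-!
Along the Jungck orbit `g (u (n + 1)) = f (u n)` the defects `D n = d (f (u n)) (g (u n))` satisfy
`D (n + 1) ⪯ B (D (n + 1) + D n)`, so `‖D n‖` decays geometrically with ratio `‖B‖ / (1 - ‖B‖) < 1`,
and `d (f (u m)) (f (u n)) ⪯ B (D m + D n)` makes `f ∘ u` Cauchy without using the triangle
inequality. By (P1) its limit `g v` is adjacent to infinitely many orbit points, and the triangle
inequality through them gives `‖d (f v) (g v)‖ ≤ ‖A B‖ ‖d (f v) (g v)‖ + o(1)`; the noncommutative
input is `‖a x‖ ≤ ‖a b‖ ‖w‖` for `0 ⪯ x ⪯ b w` with `b` central. Uniqueness follows from (P2) and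
the contraction, and weak compatibility turns the unique point of coincidence into the unique
common fixed point.
-/

open Filter Topology Relation

section CStarAlgebra

variable {𝔸 : Type*} [CStarAlgebra 𝔸] [PartialOrder 𝔸] [StarOrderedRing 𝔸]

lemma mul_le_mul_left_of_commute {b x y : 𝔸} (hb : 0 ≤ b) (hxy : x ≤ y)
    (hbx : Commute b x) (hby : Commute b y) : b * x ≤ b * y := by
  have h := Commute.mul_nonneg hb (sub_nonneg.2 hxy) (hby.sub_right hbx)
  rwa [mul_sub, sub_nonneg] at h

lemma norm_le_norm_mul_of_one_le {a b : 𝔸} (hb : 0 ≤ b) (ha : 1 ≤ a) (hba : Commute b a) :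
    ‖b‖ ≤ ‖b * a‖ :=
  CStarAlgebra.norm_le_norm_of_nonneg_of_le hb <| by
    simpa using mul_le_mul_left_of_commute hb ha (Commute.one_right b) hba

lemma norm_le_of_le_mul_add {b x y z : 𝔸} (hx : 0 ≤ x) (h : x ≤ b * (y + z)) :
    ‖x‖ ≤ ‖b‖ * (‖y‖ + ‖z‖) :=
  calc ‖x‖ ≤ ‖b * (y + z)‖ := CStarAlgebra.norm_le_norm_of_nonneg_of_le hx h
    _ ≤ ‖b‖ * (‖y‖ + ‖z‖) := (norm_mul_le _ _).trans (by gcongr; exact norm_add_le _ _)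

/-- Squaring: `‖a x‖² = ‖a x² a⋆‖ ≤ ‖a c x a⋆‖ ≤ ‖a c‖ ‖a x‖`, where `x² ≤ c x` because
`c - x ⪰ 0` commutes with `x`. -/
lemma norm_mul_le_norm_mul_of_le_of_commute {a c x : 𝔸} (hx : 0 ≤ x) (hxc : x ≤ c)
    (hcx : Commute c x) : ‖a * x‖ ≤ ‖a * c‖ := by
  have hxx : x * x ≤ c * x := by
    simpa [sub_mul] using Commute.mul_nonneg (sub_nonneg.2 hxc) hx (hcx.sub_left (.refl x))
  have hstar : star (a * x) = x * star a := by rw [star_mul, hx.isSelfAdjoint.star_eq]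
  have key : ‖a * x‖ * ‖a * x‖ ≤ ‖a * c‖ * ‖a * x‖ :=
    calc ‖a * x‖ * ‖a * x‖ = ‖a * (x * x) * star a‖ := by
          rw [← CStarRing.norm_self_mul_star, hstar]; simp only [mul_assoc]
      _ ≤ ‖a * (c * x) * star a‖ := CStarAlgebra.norm_le_norm_of_nonneg_of_le
          (star_right_conjugate_nonneg (Commute.mul_nonneg hx hx (.refl x)) a)
          (star_right_conjugate_le_conjugate hxx a)
      _ = ‖(a * c) * star (a * x)‖ := by rw [hstar]; simp only [mul_assoc]
      _ ≤ ‖a * c‖ * ‖a * x‖ := (norm_mul_le _ _).trans_eq (by rw [norm_star])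
  rcases (norm_nonneg (a * x)).eq_or_lt with h0 | h0
  · exact h0 ▸ norm_nonneg _
  · exact le_of_mul_le_mul_right key h0

lemma norm_mul_le_of_le_mul_of_commute {a b w x : 𝔸} (hb : 0 ≤ b) (hw : 0 ≤ w) (hx : 0 ≤ x)
    (h : x ≤ b * w) (hbw : Commute b w) (hbx : Commute b x) : ‖a * x‖ ≤ ‖a * b‖ * ‖w‖ := by
  have hw_le : w ≤ algebraMap ℝ 𝔸 ‖w‖ := hw.isSelfAdjoint.le_algebraMap_norm_self
  have hx_le : x ≤ ‖w‖ • b := h.trans <| by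
    simpa [Algebra.algebraMap_eq_smul_one] using
      mul_le_mul_left_of_commute hb hw_le hbw (Algebra.commutes _ b).symm
  calc ‖a * x‖ ≤ ‖a * (‖w‖ • b)‖ :=
        norm_mul_le_norm_mul_of_le_of_commute hx hx_le (hbx.smul_left _)
    _ = ‖a * b‖ * ‖w‖ := by rw [mul_smul_comm, norm_smul, norm_norm, mul_comm]

end CStarAlgebra

lemma tendsto_zero_of_le_mul_add_succ {r : ℕ → ℝ} {b : ℝ} (hb₀ : 0 ≤ b) (hb : b < 1 / 2)
    (hr : ∀ n, 0 ≤ r n) (h : ∀ n, r (n + 1) ≤ b * (r (n + 1) + r n)) :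
    Tendsto r atTop (𝓝 0) := by
  have h1b : 0 < 1 - b := by linarith
  set c := b / (1 - b)
  have hc₀ : 0 ≤ c := div_nonneg hb₀ h1b.le
  have hc : c < 1 := by rw [div_lt_one h1b]; linarith
  have hstep : ∀ n, r (n + 1) ≤ c * r n := fun n => by
    rw [div_mul_eq_mul_div, le_div_iff₀ h1b]; linarith [h n]
  refine squeeze_zero hr (fun n => le_geom hc₀ n fun k _ => hstep k) ?_
  simpa using (tendsto_pow_atTop_nhds_zero_of_lt_one hc₀ hc).mul_const (r 0)

lemma cauchy_of_le_mul_add {ρ : ℕ → ℕ → ℝ} {r : ℕ → ℝ} {b : ℝ} (hr : Tendsto r atTop (𝓝 0))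
    (h : ∀ m n, ρ m n ≤ b * (r m + r n)) :
    ∀ ε : ℝ, 0 < ε → ∃ N, ∀ m ≥ N, ∀ n ≥ N, ρ m n < ε := by
  intro ε hε
  have hlim : Tendsto (fun p : ℕ × ℕ => b * (r p.1 + r p.2)) atTop (𝓝 0) := by
    rw [← prod_atTop_atTop_eq]
    simpa using ((hr.comp tendsto_fst).add (hr.comp tendsto_snd)).const_mul b
  exact (eventually_atTop_prod_self'.1 (hlim.eventually_lt_const hε)).imp
    fun N hN m hm n hn => (h m n).trans_lt (hN m hm n hn)

lemma nonpos_of_le_mul_add {t c : ℝ} {a : ℕ → ℝ} (hc : c < 1) (ha : Tendsto a atTop (𝓝 0))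
    (h : ∀ n, t ≤ c * t + a n) : t ≤ 0 := by
  have ht : t ≤ c * t + 0 := ge_of_tendsto' (tendsto_const_nhds.add ha) h
  nlinarith

section Coincidence

variable {X 𝔸 : Type*} {d : X → X → 𝔸} {E : X → X → Prop} {f g : X → X}

def IsKannanContraction [Mul 𝔸] [Add 𝔸] [LE 𝔸] (d : X → X → 𝔸) (E : X → X → Prop)
    (f g : X → X) (B : 𝔸) : Prop :=
  ∀ x y, SymmGen E (g x) (g y) → d (f x) (f y) ≤ B * (d (f x) (g x) + d (f y) (g y))

lemma IsKannanContraction.eq_of_coincidence [NonUnitalNonAssocSemiring 𝔸] [PartialOrder 𝔸]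
    {B : 𝔸} (hK : IsKannanContraction d E f g B) (hd_nonneg : ∀ x y, 0 ≤ d x y)
    (hd_eq_zero : ∀ x y, d x y = 0 ↔ x = y) {x₁ x₂ : X} (h₁ : f x₁ = g x₁) (h₂ : f x₂ = g x₂)
    (he : SymmGen E (g x₁) (g x₂)) : f x₁ = f x₂ := by
  have h := hK x₁ x₂ he
  rw [(hd_eq_zero _ _).2 h₁, (hd_eq_zero _ _).2 h₂, add_zero, mul_zero] at h
  exact (hd_eq_zero _ _).1 (le_antisymm h (hd_nonneg _ _))

theorem existsUnique_commonFixedPoint_of_weaklyCompatible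
    (h : ∃! y, ∃ x, f x = y ∧ g x = y) (hfg : ∀ x, f x = g x → f (g x) = g (f x)) :
    ∃! z, f z = z ∧ g z = z := by
  obtain ⟨y, ⟨x, hfx, hgx⟩, hy⟩ := h
  have hfgy : f y = g y := by
    have h := hfg x (hfx.trans hgx.symm)
    rwa [hfx, hgx] at h
  have hfy : f y = y := hy (f y) ⟨y, rfl, hfgy.symm⟩
  exact ⟨y, ⟨hfy, hfgy.symm.trans hfy⟩, fun z hz => hy z ⟨z, hz⟩⟩

end Coincidence

section KannanContraction

variable {X 𝔸 : Type*} [CStarAlgebra 𝔸] [PartialOrder 𝔸] [StarOrderedRing 𝔸]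
  {d : X → X → 𝔸} {A B : 𝔸} {E : X → X → Prop} {f g : X → X}

namespace IsKannanContraction

lemma tendsto_norm_dist_orbit (hK : IsKannanContraction d E f g B)
    (hd_nonneg : ∀ x y, 0 ≤ d x y) (hB : ‖B‖ < 1 / 2) {u : ℕ → X}
    (hu : ∀ n, g (u (n + 1)) = f (u n)) (hedge : ∀ n, SymmGen E (g (u (n + 1))) (g (u n))) :
    Tendsto (fun n => ‖d (f (u n)) (g (u n))‖) atTop (𝓝 0) :=
  tendsto_zero_of_le_mul_add_succ (norm_nonneg B) hB (fun _ => norm_nonneg _) fun n =>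
    norm_le_of_le_mul_add (hd_nonneg _ _) <|
      (congrArg (d (f (u (n + 1)))) (hu n)).trans_le (hK _ _ (hedge n))

lemma norm_dist_le (hK : IsKannanContraction d E f g B) (hd_nonneg : ∀ x y, 0 ≤ d x y)
    (hd_triangle : ∀ x y z, d x y ≤ A * (d x z + d z y)) (hB_pos : 0 ≤ B)
    (hB_central : ∀ a, Commute B a) {v w : X} (he : SymmGen E (g v) (g w)) :
    ‖d (f v) (g v)‖ ≤
      ‖A * B‖ * (‖d (f v) (g v)‖ + ‖d (f w) (g w)‖) + ‖A‖ * ‖d (f w) (g v)‖ :=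
  calc ‖d (f v) (g v)‖ ≤ ‖A * (d (f v) (f w) + d (f w) (g v))‖ :=
        CStarAlgebra.norm_le_norm_of_nonneg_of_le (hd_nonneg _ _) (hd_triangle _ _ _)
    _ ≤ ‖A * d (f v) (f w)‖ + ‖A * d (f w) (g v)‖ := by rw [mul_add]; exact norm_add_le _ _
    _ ≤ ‖A * B‖ * ‖d (f v) (g v) + d (f w) (g w)‖ + ‖A‖ * ‖d (f w) (g v)‖ := by
      gcongr
      · exact norm_mul_le_of_le_mul_of_commute hB_pos (add_nonneg (hd_nonneg _ _)
          (hd_nonneg _ _)) (hd_nonneg _ _) (hK v w he) (hB_central _) (hB_central _)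
      · exact norm_mul_le _ _
    _ ≤ ‖A * B‖ * (‖d (f v) (g v)‖ + ‖d (f w) (g w)‖) + ‖A‖ * ‖d (f w) (g v)‖ := by
      gcongr; exact norm_add_le _ _

theorem exists_coincidence (hK : IsKannanContraction d E f g B)
    (hd_nonneg : ∀ x y, 0 ≤ d x y) (hd_eq_zero : ∀ x y, d x y = 0 ↔ x = y)
    (hd_triangle : ∀ x y z, d x y ≤ A * (d x z + d z y)) (hA_one : 1 ≤ A) (hB_pos : 0 ≤ B)
    (hB_central : ∀ a, Commute B a) (hnorm : ‖B * A‖ < 1 / 2)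
    (hg_complete : ∀ s : ℕ → X, (∀ n, s n ∈ Set.range g) →
      (∀ ε : ℝ, 0 < ε → ∃ N, ∀ m ≥ N, ∀ n ≥ N, ‖d (s m) (s n)‖ < ε) →
      ∃ p ∈ Set.range g, Tendsto (fun n => ‖d (s n) p‖) atTop (𝓝 0))
    (hP1 : ∀ (u : ℕ → X) (p : X), Tendsto (fun n => ‖d (g (u n)) p‖) atTop (𝓝 0) →
      (∀ n, SymmGen E (g (u n)) (g (u (n + 1)))) →
      ∃ φ : ℕ → ℕ, StrictMono φ ∧ ∀ i, SymmGen E (g (u (φ i))) p)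
    {u : ℕ → X} (hu : ∀ n, g (u (n + 1)) = f (u n))
    (hedge : ∀ m n, SymmGen E (g (u m)) (g (u n))) :
    ∃ v, f v = g v := by
  have hB : ‖B‖ < 1 / 2 :=
    (norm_le_norm_mul_of_one_le hB_pos hA_one (hB_central A)).trans_lt hnorm
  have hAB : ‖A * B‖ < 1 := by rw [← hB_central A]; linarith
  have hr := hK.tendsto_norm_dist_orbit hd_nonneg hB hu fun n => hedge (n + 1) n
  obtain ⟨_, ⟨v, rfl⟩, hfu⟩ := hg_complete (f ∘ u) (fun n => ⟨u (n + 1), hu n⟩) <|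
    cauchy_of_le_mul_add hr fun m n => norm_le_of_le_mul_add (hd_nonneg _ _) (hK _ _ (hedge m n))
  obtain ⟨φ, hφ, hφE⟩ := hP1 (fun n => u (n + 1)) (g v)
    (by simpa only [Function.comp_apply, hu] using hfu) fun n => hedge (n + 1) (n + 2)
  have hψ : Tendsto (fun i => φ i + 1) atTop atTop :=
    (tendsto_add_atTop_nat 1).comp hφ.tendsto_atTop
  have hlim : Tendsto (fun i => ‖A * B‖ * ‖d (f (u (φ i + 1))) (g (u (φ i + 1)))‖ +
      ‖A‖ * ‖d (f (u (φ i + 1))) (g v)‖) atTop (𝓝 0) := by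
    simpa using ((hr.comp hψ).const_mul _).add ((hfu.comp hψ).const_mul _)
  have hδ : ‖d (f v) (g v)‖ ≤ 0 := nonpos_of_le_mul_add hAB hlim fun i => by
    linarith [hK.norm_dist_le hd_nonneg hd_triangle hB_pos hB_central (hφE i).symm]
  exact ⟨v, (hd_eq_zero _ _).1 (norm_le_zero_iff.1 hδ)⟩

end IsKannanContraction

end KannanContraction

theorem common_fixed_point_of_cstar_bmetric_graph_kannan_contraction_general
    {X : Type*} {𝔸 : Type*} [CStarAlgebra 𝔸] [PartialOrder 𝔸] [StarOrderedRing 𝔸]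
    (d : X → X → 𝔸) (A : 𝔸)
    (hA_one : (1 : 𝔸) ≤ A)
    (hd_nonneg : ∀ x y, 0 ≤ d x y)
    (hd_eq_zero : ∀ x y, d x y = 0 ↔ x = y)
    (hd_triangle : ∀ x y z, d x y ≤ A * (d x z + d z y))
    (E : X → X → Prop)
    (f g : X → X) (B : 𝔸)
    (hB_pos : 0 ≤ B) (hB_central : ∀ a : 𝔸, B * a = a * B)
    (hcontr : ∀ x y, (E (g x) (g y) ∨ E (g y) (g x)) →
      d (f x) (f y) ≤ B * (d (f x) (g x) + d (f y) (g y)))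
    (hnorm : ‖B * A‖ < 1 / 2)
    -- `g(X)` is a complete subspace of `X`
    (hg_complete : ∀ s : ℕ → X, (∀ n, s n ∈ Set.range g) →
      (∀ ε : ℝ, 0 < ε → ∃ N, ∀ m ≥ N, ∀ n ≥ N, ‖d (s m) (s n)‖ < ε) →
      ∃ p ∈ Set.range g, Filter.Tendsto (fun n => ‖d (s n) p‖) Filter.atTop (nhds 0))
    -- property (P1)
    (hP1 : ∀ (u : ℕ → X) (p : X),
      Filter.Tendsto (fun n => ‖d (g (u n)) p‖) Filter.atTop (nhds 0) →
      (∀ n, E (g (u n)) (g (u (n + 1))) ∨ E (g (u (n + 1))) (g (u n))) →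
      ∃ φ : ℕ → ℕ, StrictMono φ ∧ ∀ i, E (g (u (φ i))) p ∨ E p (g (u (φ i))))
    -- `C_{gf} ≠ ∅`
    (hC : ∃ u : ℕ → X, (∀ n, g (u (n + 1)) = f (u n)) ∧
      ∀ m n, E (g (u m)) (g (u n)) ∨ E (g (u n)) (g (u m))) :
    (∃ y x, f x = y ∧ g x = y) ∧
    -- property (P2) gives uniqueness of the point of coincidence
    ((∀ y₁ y₂, (∃ x, f x = y₁ ∧ g x = y₁) → (∃ x, f x = y₂ ∧ g x = y₂) →
        (E y₁ y₂ ∨ E y₂ y₁)) →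
      (∃! y, ∃ x, f x = y ∧ g x = y) ∧
      -- weak compatibility gives a unique common fixed point
      ((∀ x, f x = g x → f (g x) = g (f x)) → ∃! z, f z = z ∧ g z = z)) := by
  obtain ⟨u, hu, hedge⟩ := hC
  obtain ⟨v, hv⟩ := IsKannanContraction.exists_coincidence hcontr hd_nonneg hd_eq_zero hd_triangle
    hA_one hB_pos hB_central hnorm hg_complete hP1 hu hedge
  have hPCv : ∃ x, f x = f v ∧ g x = f v := ⟨v, rfl, hv.symm⟩
  refine ⟨⟨f v, hPCv⟩, fun hP2 => ?_⟩
  have hPC : ∃! y, ∃ x, f x = y ∧ g x = y := by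
    refine ⟨f v, hPCv, ?_⟩
    rintro _ ⟨x, rfl, hx⟩
    exact IsKannanContraction.eq_of_coincidence hcontr hd_nonneg hd_eq_zero hx.symm hv <| by
      rw [hx, ← hv]; exact hP2 _ _ ⟨x, rfl, hx⟩ hPCv
  exact ⟨hPC, existsUnique_commonFixedPoint_of_weaklyCompatible hPC⟩

/-- **Theorem 3.5.** Let `(X, 𝔸, d)` be a `C*`-algebra-valued `b`-metric space with
coefficient `A`, endowed with a graph `G` (edge relation `E` containing all loops),
and let `f, g : X → X` satisfy
`d (f x) (f y) ⪯ B ⬝ (d (f x) (g x) + d (f y) (g y))` whenever `(g x, g y)` is an edge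
of the symmetrized graph `G̃`, where `B` is a positive element of `𝔸` commuting with
every element of `𝔸` and `‖B ⬝ A‖ < 1/2`.  Suppose `f(X) ⊆ g(X)`, `g(X)` is a complete
subspace of `X`, and property (P1) holds.  Then:
(i) if `C_{gf} ≠ ∅` then the set `PC(f, g)` of points of coincidence is nonempty;
(ii) if moreover property (P2) holds then `PC(f, g)` is a singleton;
(iii) if in addition `f` and `g` are weakly compatible then `f` and `g` have a unique
common fixed point. -/
theorem common_fixed_point_of_cstar_bmetric_graph_kannan_contraction
    {X : Type*} {𝔸 : Type*} [CStarAlgebra 𝔸] [PartialOrder 𝔸] [StarOrderedRing 𝔸]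
    (d : X → X → 𝔸) (A : 𝔸)
    (hA_pos : 0 ≤ A) (hA_one : (1 : 𝔸) ≤ A)
    (hd_nonneg : ∀ x y, 0 ≤ d x y)
    (hd_eq_zero : ∀ x y, d x y = 0 ↔ x = y)
    (hd_symm : ∀ x y, d x y = d y x)
    (hd_triangle : ∀ x y z, d x y ≤ A * (d x z + d z y))
    (E : X → X → Prop) (hE_refl : ∀ x, E x x)
    (f g : X → X) (B : 𝔸)
    (hB_pos : 0 ≤ B) (hB_central : ∀ a : 𝔸, B * a = a * B)
    (hcontr : ∀ x y, (E (g x) (g y) ∨ E (g y) (g x)) →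
      d (f x) (f y) ≤ B * (d (f x) (g x) + d (f y) (g y)))
    (hnorm : ‖B * A‖ < 1 / 2)
    (hrange : Set.range f ⊆ Set.range g)
    -- `g(X)` is a complete subspace of `X`
    (hg_complete : ∀ s : ℕ → X, (∀ n, s n ∈ Set.range g) →
      (∀ ε : ℝ, 0 < ε → ∃ N, ∀ m ≥ N, ∀ n ≥ N, ‖d (s m) (s n)‖ < ε) →
      ∃ p ∈ Set.range g, Filter.Tendsto (fun n => ‖d (s n) p‖) Filter.atTop (nhds 0))
    -- property (P1)
    (hP1 : ∀ (u : ℕ → X) (p : X),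
      Filter.Tendsto (fun n => ‖d (g (u n)) p‖) Filter.atTop (nhds 0) →
      (∀ n, E (g (u n)) (g (u (n + 1))) ∨ E (g (u (n + 1))) (g (u n))) →
      ∃ φ : ℕ → ℕ, StrictMono φ ∧ ∀ i, E (g (u (φ i))) p ∨ E p (g (u (φ i))))
    -- `C_{gf} ≠ ∅`
    (hC : ∃ u : ℕ → X, (∀ n, g (u (n + 1)) = f (u n)) ∧
      ∀ m n, E (g (u m)) (g (u n)) ∨ E (g (u n)) (g (u m))) :
    (∃ y x, f x = y ∧ g x = y) ∧
    -- property (P2) gives uniqueness of the point of coincidence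
    ((∀ y₁ y₂, (∃ x, f x = y₁ ∧ g x = y₁) → (∃ x, f x = y₂ ∧ g x = y₂) →
        (E y₁ y₂ ∨ E y₂ y₁)) →
      (∃! y, ∃ x, f x = y ∧ g x = y) ∧
      -- weak compatibility gives a unique common fixed point
      ((∀ x, f x = g x → f (g x) = g (f x)) → ∃! z, f z = z ∧ g z = z)) :=
  common_fixed_point_of_cstar_bmetric_graph_kannan_contraction_general d A hA_one hd_nonneg
    hd_eq_zero hd_triangle E f g B hB_pos hB_central hcontr hnorm hg_complete hP1 hC
end

section
/- Let H be a complex Hilbert space and L(H) the C*-algebra of bounded linear operators on H. Let (Bₙ)_{n≥1} be a sequence in L(H) such that the series ∑_{n=1}^∞ ‖Bₙ‖² converges with sum β < 1/2 (so in particular ∑_{n=1}^∞ ‖Bₙ‖⁴ < 1/4), and let Q ∈ L(H) be a positive operator. Then the operator equation X − ∑_{n=1}^∞ Bₙ* X Bₙ = Q has a unique solution X in L(H), where the series ∑_{n=1}^∞ Bₙ* X Bₙ converges absolutely in operator norm. -/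
/-- **Application 4.1 (existence and uniqueness).** Let `H` be a complex Hilbert space
and `L(H)` the `C*`-algebra of bounded linear operators on `H`.  Let `(Bₙ)` be a
sequence in `L(H)` with `∑ ‖Bₙ‖²` convergent of sum `< 1/2`, and let `Q ∈ L(H)` be a
positive operator.  Then each series `∑ₙ Bₙ* X Bₙ` converges absolutely in operator
norm, and the operator equation `X - ∑ₙ Bₙ* X Bₙ = Q` has a unique solution in `L(H)`. -/
theorem operator_equation_unique_solution
    {H : Type*} [NormedAddCommGroup H] [InnerProductSpace ℂ H] [CompleteSpace H]
    (B : ℕ → H →L[ℂ] H)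
    (hsum : Summable fun n => ‖B n‖ ^ 2)
    (hβ : (∑' n, ‖B n‖ ^ 2) < 1 / 2)
    (Q : H →L[ℂ] H) (hQ : Q.IsPositive) :
    (∀ X : H →L[ℂ] H, Summable fun n => ‖star (B n) * X * B n‖) ∧
    ∃! X : H →L[ℂ] H, X - ∑' n, star (B n) * X * B n = Q := by
  have hβ0 : 0 ≤ ∑' n, ‖B n‖ ^ 2 := tsum_nonneg fun n => sq_nonneg _
  have hterm : ∀ (X : H →L[ℂ] H) n, ‖star (B n) * X * B n‖ ≤ ‖B n‖ ^ 2 * ‖X‖ := by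
    intro X n
    calc ‖star (B n) * X * B n‖ ≤ ‖star (B n) * X‖ * ‖B n‖ := norm_mul_le _ _
      _ ≤ ‖star (B n)‖ * ‖X‖ * ‖B n‖ := by gcongr; exact norm_mul_le _ _
      _ = ‖B n‖ ^ 2 * ‖X‖ := by rw [norm_star]; ring
  have key : ∀ X : H →L[ℂ] H, Summable fun n => ‖star (B n) * X * B n‖ := fun X =>
    Summable.of_nonneg_of_le (fun n => norm_nonneg _) (fun n => hterm X n)
      (hsum.mul_right ‖X‖)
  refine ⟨key, ?_⟩
  have keyop : ∀ X : H →L[ℂ] H, Summable fun n => star (B n) * X * B n := fun X =>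
    Summable.of_norm (key X)
  have hbound : ∀ X : H →L[ℂ] H,
      ‖∑' n, star (B n) * X * B n‖ ≤ (∑' n, ‖B n‖ ^ 2) * ‖X‖ := by
    intro X
    calc ‖∑' n, star (B n) * X * B n‖ ≤ ∑' n, ‖star (B n) * X * B n‖ :=
          norm_tsum_le_tsum_norm (key X)
      _ ≤ ∑' n, ‖B n‖ ^ 2 * ‖X‖ :=
          Summable.tsum_le_tsum (fun n => hterm X n) (key X) (hsum.mul_right _)
      _ = (∑' n, ‖B n‖ ^ 2) * ‖X‖ := tsum_mul_right
  set f : (H →L[ℂ] H) → (H →L[ℂ] H) := fun X => Q + ∑' n, star (B n) * X * B n with hf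
  have hdiff : ∀ X Y : H →L[ℂ] H, f X - f Y = ∑' n, star (B n) * (X - Y) * B n := by
    intro X Y
    have : (∑' n, star (B n) * X * B n) - ∑' n, star (B n) * Y * B n
        = ∑' n, star (B n) * (X - Y) * B n := by
      rw [← Summable.tsum_sub (keyop X) (keyop Y)]
      congr 1; funext n; noncomm_ring
    simp only [hf, add_sub_add_left_eq_sub, this]
  have hcontract : ContractingWith ⟨∑' n, ‖B n‖ ^ 2, hβ0⟩ f := by
    constructor
    · exact_mod_cast lt_trans hβ (by norm_num)
    · apply LipschitzWith.of_dist_le_mul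
      intro X Y
      rw [dist_eq_norm, dist_eq_norm, hdiff X Y]
      exact hbound (X - Y)
  have hfix : ∃! X : H →L[ℂ] H, f X = X := by
    refine ⟨hcontract.fixedPoint f, hcontract.fixedPoint_isFixedPt, ?_⟩
    intro Y hY
    exact hcontract.fixedPoint_unique hY
  obtain ⟨X, hX, hXu⟩ := hfix
  refine ⟨X, ?_, ?_⟩
  · show X - ∑' n, star (B n) * X * B n = Q
    exact sub_eq_of_eq_add hX.symm
  · intro Y hY
    refine hXu Y ?_
    show Q + ∑' n, star (B n) * Y * B n = Y
    rw [← hY]; abel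
end

section
/- Let H be a complex Hilbert space and L(H) the C*-algebra of bounded linear operators on H. Let (Bₙ)_{n≥1} be a sequence in L(H) such that ∑_{n=1}^∞ ‖Bₙ‖² converges with sum β < 1/2, and let Q ∈ L(H) be a positive operator. Then the unique solution X ∈ L(H) of the operator equation X − ∑_{n=1}^∞ Bₙ* X Bₙ = Q is a positive (in particular, self-adjoint/Hermitian) operator. -/
/-! `X ↦ ∑ₙ Bₙ* X Bₙ + Q` is a contraction with constant `∑ ‖Bₙ‖² < 1`, so the equation has
a unique solution, its fixed point. The map sends the positive cone, which is closed, into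
itself, so the fixed point, being the limit of the iterates starting at `Q ≥ 0`, is positive. -/

open Function Set Filter

theorem ContractingWith.fixedPoint_mem_of_isClosed {α : Type*} [MetricSpace α] [CompleteSpace α]
    [Nonempty α] {K : NNReal} {f : α → α} (hf : ContractingWith K f) {s : Set α} (hs : IsClosed s)
    (hsf : MapsTo f s s) {x : α} (hx : x ∈ s) : fixedPoint f hf ∈ s :=
  hs.mem_of_tendsto (hf.tendsto_iterate_fixedPoint x) (Eventually.of_forall (hsf.iterate · hx))

section StarConjugation

variable {A : Type*} [NormedRing A] [StarRing A] [NormedStarGroup A]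

theorem norm_star_mul_mul_le (b x : A) : ‖star b * x * b‖ ≤ ‖b‖ ^ 2 * ‖x‖ :=
  calc ‖star b * x * b‖ ≤ ‖star b‖ * ‖x‖ * ‖b‖ := norm_mul₃_le
    _ = ‖b‖ ^ 2 * ‖x‖ := by rw [norm_star]; ring

variable {B : ℕ → A}

theorem norm_tsum_star_mul_mul_le (hB : Summable fun n => ‖B n‖ ^ 2) (x : A) :
    ‖∑' n, star (B n) * x * B n‖ ≤ (∑' n, ‖B n‖ ^ 2) * ‖x‖ :=
  tsum_of_norm_bounded (hB.hasSum.mul_right ‖x‖) fun n => norm_star_mul_mul_le (B n) x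

theorem summable_star_mul_mul [CompleteSpace A] (hB : Summable fun n => ‖B n‖ ^ 2) (x : A) :
    Summable fun n => star (B n) * x * B n :=
  .of_norm_bounded (hB.mul_right ‖x‖) fun n => norm_star_mul_mul_le (B n) x

theorem contractingWith_tsum_star_mul_mul_add [CompleteSpace A]
    (hB : Summable fun n => ‖B n‖ ^ 2) (hβ : ∑' n, ‖B n‖ ^ 2 < 1) (q : A) :
    ContractingWith (∑' n, ‖B n‖ ^ 2).toNNReal fun x => (∑' n, star (B n) * x * B n) + q := by
  have hβ₀ : 0 ≤ ∑' n, ‖B n‖ ^ 2 := tsum_nonneg fun n => sq_nonneg _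
  refine ⟨by simpa [← NNReal.coe_lt_coe, hβ₀] using hβ, .of_dist_le_mul fun x y => ?_⟩
  have hsub : (∑' n, star (B n) * x * B n) - ∑' n, star (B n) * y * B n
      = ∑' n, star (B n) * (x - y) * B n := by
    simp only [mul_sub, sub_mul]
    exact ((summable_star_mul_mul hB x).tsum_sub (summable_star_mul_mul hB y)).symm
  rw [dist_eq_norm, dist_eq_norm, add_sub_add_right_eq_sub, hsub, Real.coe_toNNReal _ hβ₀]
  exact norm_tsum_star_mul_mul_le hB (x - y)

end StarConjugation

theorem tsum_star_mul_mul_nonneg {A : Type*} [NonUnitalSemiring A] [PartialOrder A] [StarRing A]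
    [StarOrderedRing A] [TopologicalSpace A] [OrderClosedTopology A] {B : ℕ → A} {x : A}
    (hx : 0 ≤ x) : 0 ≤ ∑' n, star (B n) * x * B n :=
  tsum_nonneg fun n => star_left_conjugate_nonneg hx (B n)

/-- **Application 4.1 (positivity of the solution).** Let `H` be a complex Hilbert space
and `L(H)` the `C*`-algebra of bounded linear operators on `H`.  Let `(Bₙ)` be a
sequence in `L(H)` with `∑ ‖Bₙ‖²` convergent of sum `< 1/2`, and let `Q ∈ L(H)` be a
positive operator.  Then the unique solution `X ∈ L(H)` of the operator equation
`X - ∑ₙ Bₙ* X Bₙ = Q` is a positive (in particular self-adjoint) operator. -/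
theorem operator_equation_solution_isPositive
    {H : Type*} [NormedAddCommGroup H] [InnerProductSpace ℂ H] [CompleteSpace H]
    (B : ℕ → H →L[ℂ] H)
    (hsum : Summable fun n => ‖B n‖ ^ 2)
    (hβ : (∑' n, ‖B n‖ ^ 2) < 1 / 2)
    (Q : H →L[ℂ] H) (hQ : Q.IsPositive) :
    (∃! X : H →L[ℂ] H, X - ∑' n, star (B n) * X * B n = Q) ∧
    ∀ X : H →L[ℂ] H, X - ∑' n, star (B n) * X * B n = Q → X.IsPositive := by
  set f := fun X : H →L[ℂ] H => (∑' n, star (B n) * X * B n) + Q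
  have hf : ContractingWith _ f := contractingWith_tsum_star_mul_mul_add hsum (by linarith) Q
  have hfix (X : H →L[ℂ] H) : X - ∑' n, star (B n) * X * B n = Q ↔ IsFixedPt f X :=
    sub_eq_iff_eq_add'.trans eq_comm
  have hQ₀ : 0 ≤ Q := (ContinuousLinearMap.nonneg_iff_isPositive Q).2 hQ
  have hpos : 0 ≤ ContractingWith.fixedPoint f hf :=
    hf.fixedPoint_mem_of_isClosed isClosed_Ici
      (fun X (hX : 0 ≤ X) => add_nonneg (tsum_star_mul_mul_nonneg hX) hQ₀) hQ₀
  have huniq (X : H →L[ℂ] H) (hX : X - ∑' n, star (B n) * X * B n = Q) :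
      X = ContractingWith.fixedPoint f hf :=
    hf.fixedPoint_unique ((hfix X).1 hX)
  refine ⟨⟨_, (hfix _).2 hf.fixedPoint_isFixedPt, huniq⟩, fun X hX => ?_⟩
  rw [← ContinuousLinearMap.nonneg_iff_isPositive, huniq X hX]
  exact hpos
end
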